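/- arXiv:2409.10292 — 2 statements merged into one kernel-verified Lean document; each statement's English description precedes it below -/
import Mathlib

section
/- Let 𝒜 = {A_1,…,A_K} be n×n matrices over 𝔽 (ℝ or ℂ), h_k(Q) = Q^{-1}A_kQ, and f_𝒜(Q) = (1/2) Σ_k ‖J ∘ h_k(Q)‖². Then for every invertible Q and every matrix Z, the first (real Fréchet) differential of f_𝒜 at Q in direction Z is df_𝒜|_Q(Z) = Σ_{k=1}^K ⟨[h_k(Q), Q^{-1}Z], J ∘ h_k(Q)⟩_ℝ. -/
open Matrix

attribute [local instance] Matrix.frobeniusNormedAddCommGroup Matrix.frobeniusNormedSpace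

variable {𝕜 : Type*} [RCLike 𝕜] {n K : ℕ}

/-- The real Frobenius inner product `⟨X,Y⟩_ℝ = Re ∑ᵢⱼ Xᵢⱼ conj(Yᵢⱼ)`. -/
noncomputable def rinner (X Y : Matrix (Fin n) (Fin n) 𝕜) : ℝ :=
  RCLike.re (∑ i, ∑ j, X i j * (starRingEnd 𝕜) (Y i j))

/-- The off-diagonal part `J ∘ X`. -/
def offd (X : Matrix (Fin n) (Fin n) 𝕜) : Matrix (Fin n) (Fin n) 𝕜 :=
  fun i j => if i = j then 0 else X i j

/-- The cost functional `f_𝒜(Q) = (1/2) ∑ₖ ‖J ∘ (Q⁻¹AₖQ)‖²`. -/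
noncomputable def costF (A : Fin K → Matrix (Fin n) (Fin n) 𝕜)
    (Q : Matrix (Fin n) (Fin n) 𝕜) : ℝ :=
  (1 / 2) * ∑ k, ∑ i, ∑ j, if i ≠ j then ‖(Q⁻¹ * A k * Q) i j‖ ^ 2 else 0
/-! Differentiating `P ↦ P⁻¹ A P` at `Q`, with `d(P⁻¹) = -Q⁻¹ Z Q⁻¹`, gives the commutator
`[h, Q⁻¹ Z]` where `h = Q⁻¹ A Q`; each off-diagonal entry contributes `d‖x‖² = 2 ⟨x, dx⟩_ℝ`,
and the factor `2` cancels the `1/2` in `f_𝒜`. -/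

section RingInverse

variable {𝕜' R : Type*} [NontriviallyNormedField 𝕜'] [NormedRing R] [NormedAlgebra 𝕜' R]
  [HasSummableGeomSeries R]

open ContinuousLinearMap in
theorem hasFDerivAt_ringInverse_mul_mul (a : R) (u : Rˣ) :
    HasFDerivAt (fun x => Ring.inverse x * a * x)
      ((mul 𝕜' R (↑u⁻¹ * a * u) - (mul 𝕜' R).flip (↑u⁻¹ * a * u)).comp (mul 𝕜' R ↑u⁻¹)) u := by
  refine (((hasFDerivAt_ringInverse u).mul_const' a).mul'
    (hasFDerivAt_id (u : R))).congr_fderiv ?_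
  ext z
  simp [mul_assoc, sub_eq_add_neg]

end RingInverse

/- Mathlib's default topology instance on `Matrix` is the product topology, whereas calculus
lemmas about normed spaces produce the topology of the Frobenius norm. The two agree only up to
unfolding, which `rw` and `simp` do not perform, so in this section the latter is the instance. -/
section FrobeniusTopology

noncomputable local instance {m : Type*} [Fintype m] : TopologicalSpace (Matrix m m 𝕜) :=
  PseudoMetricSpace.toUniformSpace.toTopologicalSpace

namespace Matrix

variable {m : Type*} [Fintype m]

theorem hasFDerivAt_inv_mul_mul [DecidableEq m] (M : Matrix m m 𝕜) {Q : Matrix m m 𝕜}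
    (hQ : IsUnit Q) :
    HasFDerivAt (fun P : Matrix m m 𝕜 => P⁻¹ * M * P)
      ((LinearMap.mulLeft ℝ (Q⁻¹ * M * Q) - LinearMap.mulRight ℝ (Q⁻¹ * M * Q)) ∘ₗ
        LinearMap.mulLeft ℝ Q⁻¹).toContinuousLinearMap Q := by
  let _ := frobeniusNormedRing (m := m) (α := 𝕜)
  let _ := frobeniusNormedAlgebra (m := m) (α := 𝕜) (R := ℝ)
  obtain ⟨u, rfl⟩ := hQ
  simp_rw [nonsing_inv_eq_ringInverse, Ring.inverse_unit]
  -- the derivative built from `ContinuousLinearMap.mul` is definitionally the one stated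
  exact hasFDerivAt_ringInverse_mul_mul M u

noncomputable def entryCLM (i j : m) : Matrix m m 𝕜 →L[ℝ] 𝕜 :=
  (entryLinearMap ℝ 𝕜 i j).toContinuousLinearMap

@[simp] theorem entryCLM_apply (i j : m) (X : Matrix m m 𝕜) : entryCLM i j X = X i j := rfl

end Matrix

theorem HasFDerivAt.sum_offDiag_norm_sq {m E : Type*} [Fintype m] [DecidableEq m]
    [NormedAddCommGroup E] [NormedSpace ℝ E] {g : E → Matrix m m 𝕜}
    {g' : E →L[ℝ] Matrix m m 𝕜} {x : E} (hg : HasFDerivAt g g' x) :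
    HasFDerivAt (fun y => ∑ i, ∑ j, if i ≠ j then ‖g y i j‖ ^ 2 else 0)
      (2 • ∑ i, ∑ j, if i ≠ j then
        (innerSL ℝ (g x i j)).comp ((Matrix.entryCLM i j).comp g') else 0) x := by
  have hentry : ∀ i j, HasFDerivAt (fun y => if i ≠ j then ‖g y i j‖ ^ 2 else 0)
      (if i ≠ j then 2 • (innerSL ℝ (g x i j)).comp ((Matrix.entryCLM i j).comp g') else 0) x := by
    intro i j
    split_ifs
    · exact ((Matrix.entryCLM i j).hasFDerivAt.comp x hg).norm_sq
    · exact hasFDerivAt_const 0 x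
  refine (HasFDerivAt.fun_sum fun i _ => HasFDerivAt.fun_sum fun j _ =>
    hentry i j).congr_fderiv ?_
  simp only [Finset.smul_sum, smul_ite, smul_zero]

theorem rinner_offd (X Y : Matrix (Fin n) (Fin n) 𝕜) :
    rinner X (offd Y) = ∑ i, ∑ j, if i ≠ j then inner ℝ (Y i j) (X i j) else 0 := by
  simp only [rinner, offd, map_sum, real_inner_eq_re_inner, RCLike.inner_apply]
  refine Finset.sum_congr rfl fun i _ => Finset.sum_congr rfl fun j _ => ?_
  split_ifs <;> simp_all

noncomputable def costFDeriv (A : Fin K → Matrix (Fin n) (Fin n) 𝕜)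
    (Q : Matrix (Fin n) (Fin n) 𝕜) : Matrix (Fin n) (Fin n) 𝕜 →L[ℝ] ℝ :=
  ∑ k, ∑ i, ∑ j, if i ≠ j then
    (innerSL ℝ ((Q⁻¹ * A k * Q) i j)).comp ((Matrix.entryCLM i j).comp
      ((LinearMap.mulLeft ℝ (Q⁻¹ * A k * Q) - LinearMap.mulRight ℝ (Q⁻¹ * A k * Q)) ∘ₗ
        LinearMap.mulLeft ℝ Q⁻¹).toContinuousLinearMap) else 0

theorem hasFDerivAt_costF (A : Fin K → Matrix (Fin n) (Fin n) 𝕜)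
    {Q : Matrix (Fin n) (Fin n) 𝕜} (hQ : IsUnit Q) :
    HasFDerivAt (costF A) (costFDeriv A Q) Q := by
  refine ((HasFDerivAt.fun_sum fun k _ =>
    (Matrix.hasFDerivAt_inv_mul_mul (A k) hQ).sum_offDiag_norm_sq).const_mul
      (1 / 2 : ℝ)).congr_fderiv ?_
  simp only [costFDeriv, Finset.smul_sum, ← Nat.cast_smul_eq_nsmul ℝ, smul_smul]
  norm_num

theorem costFDeriv_apply (A : Fin K → Matrix (Fin n) (Fin n) 𝕜)
    (Q Z : Matrix (Fin n) (Fin n) 𝕜) :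
    costFDeriv A Q Z =
      ∑ k, rinner ((Q⁻¹ * A k * Q) * (Q⁻¹ * Z) - (Q⁻¹ * Z) * (Q⁻¹ * A k * Q))
        (offd (Q⁻¹ * A k * Q)) := by
  simp only [costFDeriv, rinner_offd, _root_.sum_apply, apply_ite DFunLike.coe, ite_apply,
    _root_.zero_apply, ContinuousLinearMap.comp_apply, LinearMap.coe_toContinuousLinearMap',
    LinearMap.comp_apply, LinearMap.sub_apply, LinearMap.mulLeft_apply,
    LinearMap.mulRight_apply, innerSL_apply_apply, Matrix.entryCLM_apply]

end FrobeniusTopology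

/-- the first real Fréchet differential of `f_𝒜` at an invertible `Q`
in direction `Z` equals `∑ₖ ⟨[h_k(Q), Q⁻¹Z], J ∘ h_k(Q)⟩_ℝ`. -/
theorem fderiv_costF (A : Fin K → Matrix (Fin n) (Fin n) 𝕜)
    (Q : Matrix (Fin n) (Fin n) 𝕜) (hQ : IsUnit Q) (Z : Matrix (Fin n) (Fin n) 𝕜) :
    fderiv ℝ (costF A) Q Z =
      ∑ k, rinner
        ((Q⁻¹ * A k * Q) * (Q⁻¹ * Z) - (Q⁻¹ * Z) * (Q⁻¹ * A k * Q))
        (offd (Q⁻¹ * A k * Q)) :=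
  (DFunLike.congr_fun (hasFDerivAt_costF A hQ).fderiv Z).trans (costFDeriv_apply A Q Z)
end

section
/- Let 𝒜 = {A_1,…,A_K} be n×n matrices over 𝔽 (ℝ or ℂ), h_k(Q) = Q^{-1}A_kQ, and f_𝒜(Q) = (1/2) Σ_k ‖J ∘ h_k(Q)‖². Then for every invertible Q and every matrix Z, the second (real Fréchet) differential of f_𝒜 at Q evaluated on the diagonal is d²f_𝒜|_Q(Z,Z) = Σ_{k=1}^K ( ‖J ∘ [h_k(Q), Q^{-1}Z]‖² + 2⟨[Q^{-1}Z, Q^{-1}Z·h_k(Q)], J ∘ h_k(Q)⟩_ℝ ). -/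
/-!
Each summand of `f_𝒜` is `½ q(h(P))` with `h(P) = P⁻¹ A P` and `q(X, Y) = ⟨J ∘ X, J ∘ Y⟩_ℝ`
a symmetric bilinear form, so `d²(½ q ∘ h)(Z, Z) = q(dh Z, dh Z) + q(d²h(Z, Z), h)`.
With `X = Q⁻¹ Z`, differentiating `P⁻¹` gives `dh Z = [h, X]`, and differentiating
`P ↦ [h(P), P⁻¹ Z]` once more along `Z` gives `d²h(Z, Z) = [[h, X], X] - [h, X²] = 2 [X, X h]`.
Since `q(Y, h) = ⟨Y, J ∘ h⟩_ℝ`, this is the claimed formula.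
-/

open Matrix

attribute [local instance] Matrix.frobeniusNormedAddCommGroup Matrix.frobeniusNormedSpace

variable {𝕜 : Type*} [RCLike 𝕜] {n K : ℕ}

open Topology
open scoped Ring

section Calculus

variable {𝕂 : Type*} [NontriviallyNormedField 𝕂]
  {E : Type*} [NormedAddCommGroup E] [NormedSpace 𝕂 E]
  {F : Type*} [NormedAddCommGroup F] [NormedSpace 𝕂 F]
  {G : Type*} [NormedAddCommGroup G] [NormedSpace 𝕂 G]
  {H : Type*} [NormedAddCommGroup H] [NormedSpace 𝕂 H]

theorem ContinuousLinearMap.hasLineDerivAt_of_bilinear (B : F →L[𝕂] G →L[𝕂] H)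
    {u : E → F} {w : E → G} {u' : F} {w' : G} {x v : E}
    (hu : HasLineDerivAt 𝕂 u u' x v) (hw : HasLineDerivAt 𝕂 w w' x v) :
    HasLineDerivAt 𝕂 (fun y => B (u y) (w y)) (B u' (w x) + B (u x) w') x v := by
  have h := (B.hasFDerivAt_of_bilinear hu.hasFDerivAt hw.hasFDerivAt).hasDerivAt
  simpa [HasLineDerivAt, add_comm] using h

theorem iteratedFDeriv_two_apply_diag_of_hasLineDerivAt {f : E → F} {f' : E → E →L[𝕂] F}
    {x v : E} {d : F} (hf : ContDiffAt 𝕂 2 f x) (hf' : ∀ᶠ y in 𝓝 x, HasFDerivAt f (f' y) y)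
    (hd : HasLineDerivAt 𝕂 (fun y => f' y v) d x v) :
    iteratedFDeriv 𝕂 2 f x (fun _ => v) = d := by
  have hdiff : DifferentiableAt 𝕂 (fderiv 𝕂 f) x :=
    (hf.fderiv_right (m := 1) le_rfl).differentiableAt one_ne_zero
  have hff' : (fun y => fderiv 𝕂 f y v) =ᶠ[𝓝 x] fun y => f' y v :=
    hf'.mono fun y hy => congrArg (· v) hy.fderiv
  have hdiff' : DifferentiableAt 𝕂 (fun y => f' y v) x :=
    (hdiff.clm_apply (differentiableAt_const v)).congr_of_eventuallyEq hff'.symm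
  calc iteratedFDeriv 𝕂 2 f x (fun _ => v)
      = fderiv 𝕂 (fun y => fderiv 𝕂 f y v) x v := by
        rw [iteratedFDeriv_two_apply, fderiv_clm_apply hdiff (differentiableAt_const v)]
        simp
    _ = fderiv 𝕂 (fun y => f' y v) x v := by rw [hff'.fderiv_eq]
    _ = d := (hd.unique (hdiff'.hasFDerivAt.hasLineDerivAt v)).symm

theorem ContinuousLinearMap.iteratedFDeriv_two_bilinear_self_apply_diag
    (B : F →L[𝕂] F →L[𝕂] G) {g : E → F} {g' : E → E →L[𝕂] F} {x v : E} {w : F}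
    (hg : ContDiffAt 𝕂 2 g x) (hg' : ∀ᶠ y in 𝓝 x, HasFDerivAt g (g' y) y)
    (hw : HasLineDerivAt 𝕂 (fun y => g' y v) w x v) :
    iteratedFDeriv 𝕂 2 (fun y => B (g y) (g y)) x (fun _ => v) =
      B (g x) w + B w (g x) + 2 • B (g' x v) (g' x v) := by
  have hgv : HasLineDerivAt 𝕂 g (g' x v) x v := hg'.self_of_nhds.hasLineDerivAt v
  have hd : HasLineDerivAt 𝕂 (fun y => B (g y) (g' y v) + B (g' y v) (g y))
      (B (g x) w + B w (g x) + 2 • B (g' x v) (g' x v)) x v := by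
    refine ((B.hasLineDerivAt_of_bilinear hgv hw).add
      (B.hasLineDerivAt_of_bilinear hw hgv)).congr_deriv ?_
    rw [two_nsmul]; abel
  refine iteratedFDeriv_two_apply_diag_of_hasLineDerivAt (by fun_prop)
    (hg'.mono fun y hy => B.hasFDerivAt_of_bilinear hy hy) ?_
  simpa using hd

end Calculus

section NormedAlgebra

variable {𝕂 : Type*} [NontriviallyNormedField 𝕂] {𝔸 : Type*} [NormedRing 𝔸] [NormedAlgebra 𝕂 𝔸]
  {G : Type*} [NormedAddCommGroup G] [NormedSpace 𝕂 G]

variable (𝕂 𝔸) in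
noncomputable def commL : 𝔸 →L[𝕂] 𝔸 →L[𝕂] 𝔸 :=
  ContinuousLinearMap.mul 𝕂 𝔸 - (ContinuousLinearMap.mul 𝕂 𝔸).flip

@[simp] lemma commL_apply (a b : 𝔸) : commL 𝕂 𝔸 a b = a * b - b * a := rfl

variable [HasSummableGeomSeries 𝔸]

theorem hasFDerivAt_ringInverse_mul_mul_s13 (b : 𝔸) {x : 𝔸} (hx : IsUnit x) :
    HasFDerivAt (fun y => y⁻¹ʳ * b * y)
      ((commL 𝕂 𝔸 (x⁻¹ʳ * b * x)).comp (ContinuousLinearMap.mul 𝕂 𝔸 x⁻¹ʳ)) x := by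
  obtain ⟨u, rfl⟩ := hx
  have h := ((hasFDerivAt_ringInverse (𝕜 := 𝕂) u).mul_const' b).mul' (hasFDerivAt_id (u : 𝔸))
  refine h.congr_fderiv ?_
  ext w
  simp [mul_assoc, sub_eq_add_neg]

theorem contDiffAt_ringInverse_mul_mul (b : 𝔸) {x : 𝔸} (hx : IsUnit x) {k : WithTop ℕ∞} :
    ContDiffAt 𝕂 k (fun y => y⁻¹ʳ * b * y) x := by
  obtain ⟨u, rfl⟩ := hx
  have := contDiffAt_ringInverse 𝕂 (n := k) u
  fun_prop

theorem hasLineDerivAt_commL_ringInverse_mul_mul (b z : 𝔸) {x : 𝔸} (hx : IsUnit x) :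
    HasLineDerivAt 𝕂 (fun y => commL 𝕂 𝔸 (y⁻¹ʳ * b * y) (y⁻¹ʳ * z))
      (2 • commL 𝕂 𝔸 (x⁻¹ʳ * z) (x⁻¹ʳ * z * (x⁻¹ʳ * b * x))) x z := by
  have hconj := (hasFDerivAt_ringInverse_mul_mul_s13 (𝕂 := 𝕂) b hx).hasLineDerivAt z
  obtain ⟨u, rfl⟩ := hx
  have hinv := ((hasFDerivAt_ringInverse (𝕜 := 𝕂) u).mul_const' z).hasLineDerivAt z
  refine ((commL 𝕂 𝔸).hasLineDerivAt_of_bilinear hconj hinv).congr_deriv ?_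
  simp
  noncomm_ring

theorem ContinuousLinearMap.iteratedFDeriv_two_bilinear_conj_apply_diag
    (B : 𝔸 →L[𝕂] 𝔸 →L[𝕂] G) (b z : 𝔸) {x : 𝔸} (hx : IsUnit x) :
    iteratedFDeriv 𝕂 2 (fun y => B (y⁻¹ʳ * b * y) (y⁻¹ʳ * b * y)) x (fun _ => z) =
      2 • (B (x⁻¹ʳ * b * x) (x⁻¹ʳ * z * (x⁻¹ʳ * z * (x⁻¹ʳ * b * x)) -
            x⁻¹ʳ * z * (x⁻¹ʳ * b * x) * (x⁻¹ʳ * z)) +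
          B (x⁻¹ʳ * z * (x⁻¹ʳ * z * (x⁻¹ʳ * b * x)) -
            x⁻¹ʳ * z * (x⁻¹ʳ * b * x) * (x⁻¹ʳ * z)) (x⁻¹ʳ * b * x)) +
        2 • B (x⁻¹ʳ * b * x * (x⁻¹ʳ * z) - x⁻¹ʳ * z * (x⁻¹ʳ * b * x))
          (x⁻¹ʳ * b * x * (x⁻¹ʳ * z) - x⁻¹ʳ * z * (x⁻¹ʳ * b * x)) := by
  rw [B.iteratedFDeriv_two_bilinear_self_apply_diag (contDiffAt_ringInverse_mul_mul b hx)
    (Units.isOpen.eventually_mem hx |>.mono fun y hy => hasFDerivAt_ringInverse_mul_mul_s13 b hy)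
    (hasLineDerivAt_commL_ringInverse_mul_mul b z hx)]
  simp only [commL_apply, ContinuousLinearMap.comp_apply, ContinuousLinearMap.mul_apply', map_nsmul,
    _root_.smul_apply, smul_add]

end NormedAlgebra

section FrobeniusMatrix

attribute [local instance] Matrix.frobeniusNormedRing Matrix.frobeniusNormedAlgebra

-- Otherwise `TopologicalSpace (Matrix _ _ _)` resolves to the product topology, which agrees with
-- the Frobenius one only up to unfolding, and `simp` lemmas about `offdInner` stop firing.
@[reducible] noncomputable def frobeniusTopology : TopologicalSpace (Matrix (Fin n) (Fin n) 𝕜) :=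
  (Matrix.frobeniusNormedRing :
    NormedRing (Matrix (Fin n) (Fin n) 𝕜)).toUniformSpace.toTopologicalSpace

attribute [local instance] frobeniusTopology

lemma rinner_comm (X Y : Matrix (Fin n) (Fin n) 𝕜) : rinner X Y = rinner Y X := by
  rw [rinner, rinner, ← RCLike.conj_re, map_sum]
  simp [map_sum, mul_comm]

lemma rinner_offd_left (X Y : Matrix (Fin n) (Fin n) 𝕜) :
    rinner (offd X) (offd Y) = rinner X (offd Y) := by
  simp only [rinner, offd]
  congr 1
  refine Finset.sum_congr rfl fun i _ => Finset.sum_congr rfl fun j _ => ?_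
  split_ifs <;> simp

lemma rinner_offd_self (X : Matrix (Fin n) (Fin n) 𝕜) :
    rinner (offd X) (offd X) = ∑ i, ∑ j, if i ≠ j then ‖X i j‖ ^ 2 else 0 := by
  simp only [rinner, offd, map_sum]
  refine Finset.sum_congr rfl fun i _ => Finset.sum_congr rfl fun j _ => ?_
  split_ifs <;> simp_all [RCLike.mul_conj]

lemma rinner_offd_offd (X Y : Matrix (Fin n) (Fin n) 𝕜) :
    rinner (offd X) (offd Y) =
      ∑ i, ∑ j, if i = j then 0 else RCLike.re (X i j * starRingEnd 𝕜 (Y i j)) := by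
  simp only [rinner, offd, map_sum]
  refine Finset.sum_congr rfl fun i _ => Finset.sum_congr rfl fun j _ => ?_
  split_ifs <;> simp

lemma rinner_offd_add_left (X X' Y : Matrix (Fin n) (Fin n) 𝕜) :
    rinner (offd (X + X')) (offd Y) = rinner (offd X) (offd Y) + rinner (offd X') (offd Y) := by
  simp only [rinner_offd_offd, ← Finset.sum_add_distrib]
  refine Finset.sum_congr rfl fun i _ => Finset.sum_congr rfl fun j _ => ?_
  split_ifs <;> simp [add_mul]

lemma rinner_offd_smul_left (c : ℝ) (X Y : Matrix (Fin n) (Fin n) 𝕜) :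
    rinner (offd (c • X)) (offd Y) = c • rinner (offd X) (offd Y) := by
  simp only [rinner_offd_offd, Finset.smul_sum]
  refine Finset.sum_congr rfl fun i _ => Finset.sum_congr rfl fun j _ => ?_
  split_ifs <;> simp [RCLike.smul_re]

noncomputable def offdInner : Matrix (Fin n) (Fin n) 𝕜 →L[ℝ] Matrix (Fin n) (Fin n) 𝕜 →L[ℝ] ℝ :=
  LinearMap.toContinuousBilinearMap <| LinearMap.mk₂ ℝ (fun X Y => rinner (offd X) (offd Y))
    rinner_offd_add_left rinner_offd_smul_left
    (fun X Y Y' => by simp only [rinner_comm (offd X), rinner_offd_add_left])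
    (fun c X Y => by simp only [rinner_comm (offd X), rinner_offd_smul_left])

@[simp] lemma offdInner_apply (X Y : Matrix (Fin n) (Fin n) 𝕜) :
    offdInner X Y = rinner (offd X) (offd Y) := rfl

lemma costF_eq_sum (A : Fin K → Matrix (Fin n) (Fin n) 𝕜) :
    costF A = fun P => ∑ k, (1 / 2 : ℝ) • offdInner (P⁻¹ʳ * A k * P) (P⁻¹ʳ * A k * P) := by
  ext P
  simp [costF, Finset.mul_sum, rinner_offd_self, nonsing_inv_eq_ringInverse]

lemma contDiffAt_half_offdInner_conj (b : Matrix (Fin n) (Fin n) 𝕜)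
    {Q : Matrix (Fin n) (Fin n) 𝕜} (hQ : IsUnit Q) :
    ContDiffAt ℝ 2 (fun P => (1 / 2 : ℝ) • offdInner (P⁻¹ʳ * b * P) (P⁻¹ʳ * b * P)) Q := by
  have := contDiffAt_ringInverse_mul_mul (𝕂 := ℝ) b hQ (k := 2)
  fun_prop

lemma iteratedFDeriv_two_half_offdInner_conj (b Z : Matrix (Fin n) (Fin n) 𝕜)
    {Q : Matrix (Fin n) (Fin n) 𝕜} (hQ : IsUnit Q) :
    iteratedFDeriv ℝ 2 (fun P => (1 / 2 : ℝ) • offdInner (P⁻¹ʳ * b * P) (P⁻¹ʳ * b * P)) Q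
        (fun _ => Z) =
      rinner (offd ((Q⁻¹ * b * Q) * (Q⁻¹ * Z) - (Q⁻¹ * Z) * (Q⁻¹ * b * Q)))
          (offd ((Q⁻¹ * b * Q) * (Q⁻¹ * Z) - (Q⁻¹ * Z) * (Q⁻¹ * b * Q))) +
        2 * rinner ((Q⁻¹ * Z) * (Q⁻¹ * Z * (Q⁻¹ * b * Q)) - (Q⁻¹ * Z * (Q⁻¹ * b * Q)) * (Q⁻¹ * Z))
          (offd (Q⁻¹ * b * Q)) := by
  have := contDiffAt_ringInverse_mul_mul (𝕂 := ℝ) b hQ (k := 2)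
  rw [iteratedFDeriv_const_smul_apply' (by fun_prop), _root_.smul_apply]
  -- The normed structure of the statement is `frobeniusNormedSpace`, that of the lemma is induced
  -- by `frobeniusNormedAlgebra`; they agree only up to unfolding.
  erw [offdInner.iteratedFDeriv_two_bilinear_conj_apply_diag b Z hQ]
  simp only [offdInner_apply, nonsing_inv_eq_ringInverse, rinner_comm (offd (Q⁻¹ʳ * b * Q)),
    rinner_offd_left, nsmul_eq_mul]
  ring

end FrobeniusMatrix

/-- the second real Fréchet differential of `f_𝒜` at an invertible `Q`,
evaluated on the diagonal `(Z,Z)`, equals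
`∑ₖ ( ‖J ∘ [h_k(Q),Q⁻¹Z]‖² + 2 ⟨[Q⁻¹Z, Q⁻¹Z h_k(Q)], J ∘ h_k(Q)⟩_ℝ )`. -/
theorem iteratedFDeriv_two_costF (A : Fin K → Matrix (Fin n) (Fin n) 𝕜)
    (Q : Matrix (Fin n) (Fin n) 𝕜) (hQ : IsUnit Q) (Z : Matrix (Fin n) (Fin n) 𝕜) :
    iteratedFDeriv ℝ 2 (costF A) Q (fun _ => Z) =
      ∑ k,
        (rinner
            (offd ((Q⁻¹ * A k * Q) * (Q⁻¹ * Z) - (Q⁻¹ * Z) * (Q⁻¹ * A k * Q)))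
            (offd ((Q⁻¹ * A k * Q) * (Q⁻¹ * Z) - (Q⁻¹ * Z) * (Q⁻¹ * A k * Q))) +
          2 * rinner
            ((Q⁻¹ * Z) * (Q⁻¹ * Z * (Q⁻¹ * A k * Q)) -
              (Q⁻¹ * Z * (Q⁻¹ * A k * Q)) * (Q⁻¹ * Z))
            (offd (Q⁻¹ * A k * Q))) := by
  rw [costF_eq_sum, iteratedFDeriv_fun_sum_apply fun k _ => contDiffAt_half_offdInner_conj (A k) hQ,
    _root_.sum_apply]
  exact Finset.sum_congr rfl fun k _ => iteratedFDeriv_two_half_offdInner_conj (A k) Z hQ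
end
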